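/- arXiv:1608.07922 — 6 statements merged into one kernel-verified Lean document; each statement's English description precedes it below -/
import Mathlib

section
/- Let A and B be independent random elements of spaces 𝒜 and ℬ, and let E ⊆ 𝒜 × ℬ be a measurable event with P((A,B) ∈ E) > 0. If X is a random element of 𝒜 with law ℒ(X) = ℒ(A | (A,B) ∈ E), and Y is a random element of ℬ whose conditional law given X = a is ℒ(Y | X = a) = ℒ(B | (a,B) ∈ E), then the joint law of (X,Y) equals ℒ((A,B) | (A,B) ∈ E). -/
/-!
Write `ρ` for the restriction of `μA.prod μB` to `E`. Conditioning only rescales `ρ`, so it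
suffices to recover `ρ` from its first marginal through the kernel `a ↦ μB[|E_a]`. That marginal
has density `a ↦ μB E_a` with respect to `μA`, and this density exactly cancels the normalisation
of `μB[|E_a]`, leaving the sections `μB.restrict E_a`, which reassemble to `ρ` by Fubini.
-/

open MeasureTheory ProbabilityTheory

theorem ProbabilityTheory.measure_smul_cond {β : Type*} [MeasurableSpace β] {ν : Measure β}
    {s : Set β} (hs : ν s ≠ ⊤) : ν s • ν[|s] = ν.restrict s := by
  rcases eq_or_ne (ν s) 0 with h0 | h0
  · simp [h0, Measure.restrict_eq_zero.mpr h0]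
  · rw [ProbabilityTheory.cond, smul_smul, ENNReal.mul_inv_cancel h0 hs, one_smul]

namespace MeasureTheory.Measure

variable {α β : Type*} [MeasurableSpace α] [MeasurableSpace β]

theorem withDensity_bind {μ : Measure α} {f : α → ENNReal} (hf : Measurable f)
    {κ : α → Measure β} (hκ : Measurable κ) :
    (μ.withDensity f).bind κ = μ.bind fun a => f a • κ a := by
  ext s hs
  have hκs : Measurable fun a => κ a s := measurable_coe hs |>.comp hκ
  have hfκ : Measurable fun a => f a • κ a :=
    measurable_of_measurable_coe _ fun t ht => hf.mul (measurable_coe ht |>.comp hκ)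
  rw [bind_apply hs hκ.aemeasurable, lintegral_withDensity_eq_lintegral_mul _ hf hκs,
    bind_apply hs hfκ.aemeasurable]
  rfl

section SFinite

variable (μ : Measure α) (ν : Measure β) [SFinite ν] {E : Set (α × β)}

theorem measurable_map_restrict_preimage_prodMk (hE : MeasurableSet E) :
    Measurable fun a => (ν.restrict (Prod.mk a ⁻¹' E)).map (Prod.mk a) := by
  refine measurable_of_measurable_coe _ fun t ht => ?_
  simp only [map_apply measurable_prodMk_left ht,
    restrict_apply (measurable_prodMk_left ht), ← Set.preimage_inter]
  exact measurable_measure_prodMk_left (ht.inter hE)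

theorem bind_map_restrict_preimage_prodMk (hE : MeasurableSet E) :
    μ.bind (fun a => (ν.restrict (Prod.mk a ⁻¹' E)).map (Prod.mk a)) = (μ.prod ν).restrict E := by
  ext s hs
  rw [bind_apply hs (measurable_map_restrict_preimage_prodMk ν hE).aemeasurable,
    restrict_apply hs, prod_apply (hs.inter hE)]
  refine lintegral_congr fun a => ?_
  rw [map_apply measurable_prodMk_left hs, restrict_apply (measurable_prodMk_left hs),
    Set.preimage_inter]

theorem map_fst_restrict_prod (hE : MeasurableSet E) :
    ((μ.prod ν).restrict E).map Prod.fst = μ.withDensity fun a => ν (Prod.mk a ⁻¹' E) := by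
  ext s hs
  rw [map_apply measurable_fst hs, restrict_apply (measurable_fst hs), prod_apply
    ((measurable_fst hs).inter hE), withDensity_apply _ hs, ← lintegral_indicator hs]
  refine lintegral_congr fun a => ?_
  by_cases ha : a ∈ s <;> simp [Set.indicator, ha, Set.preimage]

theorem measurable_map_cond_preimage_prodMk (hE : MeasurableSet E) :
    Measurable fun a => (ν[|Prod.mk a ⁻¹' E]).map (Prod.mk a) := by
  have hinv : Measurable fun a => (ν (Prod.mk a ⁻¹' E))⁻¹ :=
    (measurable_measure_prodMk_left hE).inv
  refine measurable_of_measurable_coe _ fun t ht => ?_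
  simp only [ProbabilityTheory.cond, Measure.map_smul, smul_apply, smul_eq_mul]
  exact hinv.mul (measurable_coe ht |>.comp (measurable_map_restrict_preimage_prodMk ν hE))

end SFinite

theorem bind_map_cond_preimage_prodMk (μ : Measure α) (ν : Measure β) [IsFiniteMeasure ν]
    {E : Set (α × β)} (hE : MeasurableSet E) :
    (((μ.prod ν).restrict E).map Prod.fst).bind (fun a => (ν[|Prod.mk a ⁻¹' E]).map (Prod.mk a))
      = (μ.prod ν).restrict E := by
  rw [map_fst_restrict_prod μ ν hE, withDensity_bind (measurable_measure_prodMk_left hE)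
    (measurable_map_cond_preimage_prodMk ν hE), ← bind_map_restrict_preimage_prodMk μ ν hE]
  congr with a : 1
  rw [← Measure.map_smul, measure_smul_cond (measure_ne_top _ _)]

end MeasureTheory.Measure

theorem pdc_lemma_general {α β : Type*} [MeasurableSpace α] [MeasurableSpace β]
    (μA : Measure α) (μB : Measure β)
    [IsProbabilityMeasure μB]
    (E : Set (α × β)) (hE : MeasurableSet E) :
    (((μA.prod μB)[|E]).map Prod.fst).bind
        (fun a => (μB[|{b | (a, b) ∈ E}]).map (fun b => (a, b)))
      = (μA.prod μB)[|E] := by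
  rw [ProbabilityTheory.cond, Measure.map_smul, Measure.bind_smul]
  exact congrArg _ (Measure.bind_map_cond_preimage_prodMk μA μB hE)

/-- **PDC Lemma.** Independent `A`, `B` are encoded by their laws `μA`, `μB`, so that the joint
law of `(A, B)` is the product measure `μA.prod μB`. If `E` is a measurable event of positive
probability, `X` has law `ℒ(A | (A,B) ∈ E)` (the first marginal of the conditioned product
measure), and, given `X = a`, `Y` has conditional law `ℒ(B | (a,B) ∈ E)`, then the joint law of
`(X, Y)` equals `ℒ((A,B) | (A,B) ∈ E)`. -/
theorem pdc_lemma {α β : Type*} [MeasurableSpace α] [MeasurableSpace β]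
    (μA : Measure α) (μB : Measure β)
    [IsProbabilityMeasure μA] [IsProbabilityMeasure μB]
    (E : Set (α × β)) (hE : MeasurableSet E)
    (hpos : 0 < (μA.prod μB) E) :
    (((μA.prod μB)[|E]).map Prod.fst).bind
        (fun a => (μB[|{b | (a, b) ∈ E}]).map (fun b => (a, b)))
      = (μA.prod μB)[|E] :=
  pdc_lemma_general μA μB E hE
end

section
/- Euler's recursion: for n ≥ 1, n·p(n) = ∑_{m=0}^{n−1} σ(n−m)·p(m), where p is the partition function with p(0) = 1 and σ(m) is the sum of the positive divisors of m. -/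
/-!
Double counting pairs `(P, (d, j))` where `P` is a partition of `n` having at least `j` parts
equal to `d`. For fixed `P` the weights `d` add up to `∑ d, d · (multiplicity of d in P) = n`,
so the total is `n · p(n)`. For fixed `(d, j)`, deleting `j` copies of `d` identifies such `P`
with partitions of `n - d j`; grouping the pairs by `k = d j` turns the total into
`∑ k, σ(k) · p(n - k)`.
-/

open Finset

theorem Finset.sum_Ioc_ite_le {M : Type*} [AddCommMonoid M] {c N : ℕ} (hc : c ≤ N) (a : M) :
    ∑ j ∈ Ioc 0 N, (if j ≤ c then a else 0) = c • a := by
  have : {j ∈ Ioc 0 N | j ≤ c} = Ioc 0 c := by ext; simp only [mem_filter, mem_Ioc]; omega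
  rw [← sum_filter, sum_const, this, Nat.card_Ioc, Nat.sub_zero]

theorem Finset.sum_Ioc_sum_Ioc_ite_mul_le_eq_sum_divisors {M : Type*} [AddCommMonoid M] (n : ℕ)
    (f : ℕ → ℕ → M) :
    ∑ d ∈ Ioc 0 n, ∑ j ∈ Ioc 0 n, (if d * j ≤ n then f d (d * j) else 0)
      = ∑ k ∈ Ioc 0 n, ∑ d ∈ k.divisors, f d k := by
  calc ∑ d ∈ Ioc 0 n, ∑ j ∈ Ioc 0 n, (if d * j ≤ n then f d (d * j) else 0)
      = ∑ x ∈ Ioc 0 n ×ˢ Ioc 0 n, ∑ k ∈ Ioc 0 n, if x.1 * x.2 = k then f x.1 k else 0 := by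
        rw [sum_product]
        refine sum_congr rfl fun d hd => sum_congr rfl fun j hj => ?_
        rw [sum_ite_eq]
        simp only [mem_Ioc] at hd hj ⊢
        simp [Nat.mul_pos hd.1 hj.1]
    _ = ∑ k ∈ Ioc 0 n, ∑ x ∈ k.divisorsAntidiagonal, f x.1 k := by
        rw [sum_comm]
        refine sum_congr rfl fun k hk => ?_
        rw [mem_Ioc] at hk
        rw [Nat.divisorsAntidiagonal_eq_prod_filter_of_le hk.1.ne' hk.2, sum_filter]
    _ = ∑ k ∈ Ioc 0 n, ∑ d ∈ k.divisors, f d k :=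
        sum_congr rfl fun k _ => Nat.sum_divisorsAntidiagonal fun d _ => f d k

theorem Finset.sum_range_eq_sum_Ioc_sub {M : Type*} [AddCommMonoid M] (n : ℕ) (f : ℕ → M) :
    ∑ m ∈ range n, f m = ∑ k ∈ Ioc 0 n, f (n - k) := by
  refine sum_nbij' (n - ·) (n - ·) ?_ ?_ ?_ ?_ ?_ <;> intro m hm <;>
    simp only [mem_range, mem_Ioc] at hm ⊢ <;> first | omega | rw [Nat.sub_sub_self hm.le]

namespace Nat.Partition

variable {n d j : ℕ}

theorem mul_le_of_replicate_le_parts {P : n.Partition} (h : Multiset.replicate j d ≤ P.parts) :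
    d * j ≤ n := by
  obtain ⟨rest, hrest⟩ := Multiset.le_iff_exists_add.mp h
  have := congrArg Multiset.sum hrest
  rw [Multiset.sum_add, Multiset.sum_replicate, smul_eq_mul, P.parts_sum] at this
  rw [mul_comm]
  omega

theorem sum_count_parts_mul (P : n.Partition) : ∑ d ∈ Ioc 0 n, P.parts.count d * d = n := by
  conv_rhs => rw [← P.parts_sum,
    sum_multiset_count_of_subset P.parts (Ioc 0 n) fun d hd => by
      rw [Multiset.mem_toFinset] at hd
      exact mem_Ioc.mpr ⟨P.parts_pos hd, P.le_of_mem_parts hd⟩]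
  rfl

theorem sum_sum_ite_replicate_le_parts (P : n.Partition) :
    ∑ d ∈ Ioc 0 n, ∑ j ∈ Ioc 0 n, (if Multiset.replicate j d ≤ P.parts then d else 0) = n := by
  conv_rhs => rw [← P.sum_count_parts_mul]
  refine sum_congr rfl fun d hd => ?_
  have hcount : P.parts.count d ≤ n :=
    le_trans (Nat.le_mul_of_pos_left _ (mem_Ioc.mp hd).1)
      (mul_le_of_replicate_le_parts (Multiset.le_count_iff_replicate_le.mp le_rfl))
  simp only [← Multiset.le_count_iff_replicate_le]
  rw [sum_Ioc_ite_le hcount, smul_eq_mul]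

def removeReplicateEquiv (hd : 0 < d) (h : d * j ≤ n) :
    {P : n.Partition // Multiset.replicate j d ≤ P.parts} ≃ (n - d * j).Partition where
  toFun P := ⟨P.1.parts - Multiset.replicate j d,
    fun hi => P.1.parts_pos (Multiset.mem_of_le (Multiset.sub_le_self _ _) hi),
    by
      have := congrArg Multiset.sum (tsub_add_cancel_of_le P.2)
      rw [Multiset.sum_add, P.1.parts_sum, Multiset.sum_replicate, smul_eq_mul] at this
      rw [mul_comm]
      omega⟩
  invFun Q := ⟨⟨Q.parts + Multiset.replicate j d,
    fun hi => by
      rcases Multiset.mem_add.1 hi with hi | hi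
      · exact Q.parts_pos hi
      · rwa [Multiset.eq_of_mem_replicate hi],
    by rw [Multiset.sum_add, Q.parts_sum, Multiset.sum_replicate, smul_eq_mul, mul_comm j d]; omega⟩,
    Multiset.le_add_left _ _⟩
  left_inv P := by ext1; ext1; simp [tsub_add_cancel_of_le P.2]
  right_inv Q := by ext1; simp

theorem card_filter_replicate_le_parts (hd : 0 < d) :
    #{P : n.Partition | Multiset.replicate j d ≤ P.parts}
      = if d * j ≤ n then Fintype.card (n - d * j).Partition else 0 := by
  split_ifs with h
  · rw [← Fintype.card_subtype, Fintype.card_congr (removeReplicateEquiv hd h)]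
  · rw [Finset.card_eq_zero, filter_eq_empty_iff]
    exact fun P _ hP => h (mul_le_of_replicate_le_parts hP)

end Nat.Partition

theorem euler_partition_recursion_general (n : ℕ) :
    n * Fintype.card (Nat.Partition n)
      = ∑ m ∈ Finset.range n,
          (∑ d ∈ (n - m).divisors, d) * Fintype.card (Nat.Partition m) := by
  calc n * Fintype.card n.Partition
      = ∑ P : n.Partition, ∑ d ∈ Ioc 0 n, ∑ j ∈ Ioc 0 n,
          (if Multiset.replicate j d ≤ P.parts then d else 0) := by
        simp only [Nat.Partition.sum_sum_ite_replicate_le_parts, sum_const, card_univ,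
          smul_eq_mul, mul_comm]
    _ = ∑ d ∈ Ioc 0 n, ∑ j ∈ Ioc 0 n,
          #{P : n.Partition | Multiset.replicate j d ≤ P.parts} * d := by
        rw [sum_comm]
        refine sum_congr rfl fun d _ => ?_
        rw [sum_comm]
        simp only [← sum_filter, sum_const, smul_eq_mul]
    _ = ∑ d ∈ Ioc 0 n, ∑ j ∈ Ioc 0 n,
          (if d * j ≤ n then d * Fintype.card (n - d * j).Partition else 0) := by
        refine sum_congr rfl fun d hd => sum_congr rfl fun j _ => ?_
        rw [Nat.Partition.card_filter_replicate_le_parts (mem_Ioc.mp hd).1, ite_mul, zero_mul,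
          mul_comm _ d]
    _ = ∑ k ∈ Ioc 0 n, (∑ d ∈ k.divisors, d) * Fintype.card (n - k).Partition := by
        rw [sum_Ioc_sum_Ioc_ite_mul_le_eq_sum_divisors n fun d k => d * Fintype.card (n - k).Partition]
        simp only [sum_mul]
    _ = ∑ m ∈ range n, (∑ d ∈ (n - m).divisors, d) * Fintype.card m.Partition := by
        rw [sum_range_eq_sum_Ioc_sub]
        refine sum_congr rfl fun k hk => ?_
        rw [Nat.sub_sub_self (mem_Ioc.mp hk).2]

/-- **Euler's recursion** for the partition function: for `n ≥ 1`,
`n · p(n) = ∑_{m=0}^{n-1} σ(n-m) · p(m)`, where `p(n)` is the number of integer partitions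
of `n` (with `p(0) = 1`) and `σ(m) = ∑_{d ∣ m} d` is the sum-of-divisors function. -/
theorem euler_partition_recursion (n : ℕ) (hn : 1 ≤ n) :
    n * Fintype.card (Nat.Partition n)
      = ∑ m ∈ Finset.range n,
          (∑ d ∈ (n - m).divisors, d) * Fintype.card (Nat.Partition m) :=
  euler_partition_recursion_general n
end

section
/- Let Z_1,…,Z_n be independent Bernoulli random variables with P(Z_i = 1) = x^i/(1 + x^i), for fixed 0 < x < 1. Then P(∑_{i=1}^n i·Z_i = n) = q(n) · x^n · ∏_{i=1}^n (1 + x^i)^{-1}, where q(n) is the number of partitions of n into distinct parts. -/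
open MeasureTheory ProbabilityTheory Finset

/-!
Since the `Z_i` are independent, `P(Z = z) = ∏ P(Z_i = z_i)`, and this vanishes unless `z` is the
`0/1` vector of a set `S ⊆ {1, …, n}`, in which case it equals `x^(∑ S) ∏ (1 + x^i)⁻¹`. The event
`∑ i Z_i = n` therefore has probability `x^n ∏ (1 + x^i)⁻¹` times the number of sets `S` with
`∑ S = n`, and these sets are exactly the partitions of `n` into distinct parts.
-/

theorem Nat.Partition.card_distincts_eq_card_filter_sum (n : ℕ) :
    #(distincts n) = #{S : Finset (Fin n) | ∑ i ∈ S, ((i : ℕ) + 1) = n} := by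
  let f : Fin n ↪ ℕ := ⟨fun i => i + 1, fun a b h => Fin.ext (by simpa using h)⟩
  have hsum (S : Finset (Fin n)) : (S.map f).val.sum = ∑ i ∈ S, ((i : ℕ) + 1) := rfl
  symm
  refine card_bij (fun S hS => ⟨(S.map f).val, fun h => ?_, ?_⟩) ?_ ?_ ?_
  · obtain ⟨i, -, rfl⟩ := Multiset.mem_map.1 h
    exact i.val.succ_pos
  · rw [hsum]
    exact (mem_filter_univ S).1 hS
  · intro S _
    simpa [distincts] using (S.map f).nodup
  · intro S _ T _ h
    exact map_injective f (val_injective (congrArg Nat.Partition.parts h))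
  · intro p hp
    set S : Finset (Fin n) := {i | (i : ℕ) + 1 ∈ p.parts}
    have hnodup : p.parts.Nodup := by simpa [distincts] using hp
    have hparts : (S.map f).val = p.parts := by
      rw [← hnodup.dedup, ← Multiset.toFinset_val, val_inj]
      ext k
      simp only [mem_map, mem_filter_univ, Multiset.mem_toFinset, S, f]
      constructor
      · rintro ⟨i, hi, rfl⟩
        exact hi
      · intro hk
        have hk1 : k - 1 + 1 = k := Nat.sub_add_cancel (p.parts_pos hk)
        have hkn := le_of_mem_parts hk
        exact ⟨⟨k - 1, by omega⟩, hk1 ▸ hk, hk1⟩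
    refine ⟨S, ?_, Nat.Partition.ext hparts⟩
    rw [mem_filter_univ, ← hsum, hparts, p.parts_sum]

theorem Finset.injective_ite_mem_one_zero {ι : Type*} [DecidableEq ι] :
    Function.Injective fun (S : Finset ι) (i : ι) => if i ∈ S then (1 : ℕ) else 0 := by
  intro S T h
  ext i
  have := congrFun h i
  by_cases hS : i ∈ S <;> by_cases hT : i ∈ T <;> simp_all

theorem Finset.prod_ite_mem_div_one_add {ι : Type*} [Fintype ι] [DecidableEq ι] (w : ι → ℝ)
    (S : Finset ι) :
    ∏ i, (if i ∈ S then w i else 1) / (1 + w i) = (∏ i ∈ S, w i) * ∏ i, (1 + w i)⁻¹ := by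
  simp_rw [div_eq_mul_inv, prod_mul_distrib, prod_ite_mem, univ_inter]

section Independent

variable {Ω ι : Type*} [MeasurableSpace Ω] {μ : Measure Ω} [Fintype ι]

theorem ProbabilityTheory.iIndepFun.measure_preimage_eq_tsum {α : Type*} [Countable α]
    [MeasurableSpace α] [MeasurableSingletonClass α] {Z : ι → Ω → α}
    (hmeas : ∀ i, Measurable (Z i)) (hindep : iIndepFun Z μ) (s : Set (ι → α)) :
    μ {ω | (fun i => Z i ω) ∈ s} = ∑' z, s.indicator (fun z => ∏ i, μ {ω | Z i ω = z i}) z := by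
  have hvec : Measurable fun ω i => Z i ω := measurable_pi_lambda _ hmeas
  have hfiber (z : ι → α) : μ ((fun ω i => Z i ω) ⁻¹' {z}) = ∏ i, μ {ω | Z i ω = z i} := by
    have : (fun ω i => Z i ω) ⁻¹' {z} = ⋂ i, Z i ⁻¹' {z i} := by
      ext ω; simp [funext_iff]
    rw [this, hindep.meas_iInter fun i => ⟨{z i}, measurableSet_singleton _, rfl⟩]
    rfl
  change μ ((fun ω i => Z i ω) ⁻¹' s) = _
  rw [← _root_.tsum_subtype, ← tsum_measure_preimage_singleton s.to_countable
    fun z _ => hvec (measurableSet_singleton z)]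
  simp only [hfiber]

variable [DecidableEq ι]

theorem ProbabilityTheory.iIndepFun.measure_preimage_eq_sum_finset {Z : ι → Ω → ℕ}
    (hmeas : ∀ i, Measurable (Z i)) (hindep : iIndepFun Z μ)
    (hZ : ∀ i k, 2 ≤ k → μ {ω | Z i ω = k} = 0) (s : Set (ι → ℕ)) :
    μ {ω | (fun i => Z i ω) ∈ s} = ∑ S : Finset ι,
      s.indicator (fun z => ∏ i, μ {ω | Z i ω = z i}) fun i => if i ∈ S then 1 else 0 := by
  rw [hindep.measure_preimage_eq_tsum hmeas, ← tsum_fintype (L := .unconditional _)]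
  refine (Finset.injective_ite_mem_one_zero.tsum_eq fun z hz => ?_).symm
  have hle (i : ι) : z i ≤ 1 := by
    by_contra! h
    exact hz (Set.indicator_apply_eq_zero.2 fun _ =>
      prod_eq_zero (mem_univ i) (hZ i (z i) h))
  refine ⟨({i | z i = 1} : Finset ι), funext fun i => ?_⟩
  have := hle i
  simp only [mem_filter_univ]
  split_ifs <;> omega

theorem prod_measure_eq_ite_mem_of_bernoulli {Z : ι → Ω → ℕ} {w : ι → ℝ} (hw : ∀ i, 0 ≤ w i)
    (h0 : ∀ i, μ {ω | Z i ω = 0} = ENNReal.ofReal (1 / (1 + w i)))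
    (h1 : ∀ i, μ {ω | Z i ω = 1} = ENNReal.ofReal (w i / (1 + w i))) (S : Finset ι) :
    ∏ i, μ {ω | Z i ω = if i ∈ S then 1 else 0} =
      ENNReal.ofReal ((∏ i ∈ S, w i) * ∏ i, (1 + w i)⁻¹) := by
  have hfactor (i : ι) : μ {ω | Z i ω = if i ∈ S then 1 else 0} =
      ENNReal.ofReal ((if i ∈ S then w i else 1) / (1 + w i)) := by
    split_ifs
    exacts [h1 i, h0 i]
  rw [prod_congr rfl fun i _ => hfactor i, ← prod_ite_mem_div_one_add,
    ENNReal.ofReal_prod_of_nonneg fun i _ => by have := hw i; positivity]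

end Independent

theorem boltzmann_distinct_partition_prob_general {Ω : Type*} [MeasurableSpace Ω]
    (μ : Measure Ω) (n : ℕ)
    (x : ℝ) (hx0 : 0 < x)
    (Z : Fin n → Ω → ℕ) (hmeas : ∀ i, Measurable (Z i))
    (hindep : iIndepFun Z μ)
    (hbern : ∀ (i : Fin n) (k : ℕ),
      μ {ω | Z i ω = k} = ENNReal.ofReal
        (if k = 0 then 1 / (1 + x ^ ((i : ℕ) + 1))
         else if k = 1 then x ^ ((i : ℕ) + 1) / (1 + x ^ ((i : ℕ) + 1))
         else 0)) :
    μ {ω | ∑ i : Fin n, ((i : ℕ) + 1) * Z i ω = n}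
      = ENNReal.ofReal (((Nat.Partition.distincts n).card : ℝ) * x ^ n *
          ∏ i : Fin n, (1 + x ^ ((i : ℕ) + 1))⁻¹) := by
  have hZ (i : Fin n) (k : ℕ) (hk : 2 ≤ k) : μ {ω | Z i ω = k} = 0 := by
    rw [hbern, if_neg (by omega), if_neg (by omega), ENNReal.ofReal_zero]
  have hweight (S : Finset (Fin n)) : ∏ i, μ {ω | Z i ω = if i ∈ S then 1 else 0} =
      ENNReal.ofReal (x ^ (∑ i ∈ S, ((i : ℕ) + 1)) * ∏ i : Fin n, (1 + x ^ ((i : ℕ) + 1))⁻¹) := by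
    rw [← prod_pow_eq_pow_sum]
    exact prod_measure_eq_ite_mem_of_bernoulli (fun i => by positivity)
      (fun i => by simpa using hbern i 0) (fun i => by simpa using hbern i 1) S
  have hweighted_sum (S : Finset (Fin n)) :
      ∑ i : Fin n, ((i : ℕ) + 1) * (if i ∈ S then 1 else 0) = ∑ i ∈ S, ((i : ℕ) + 1) := by
    simp [mul_ite, sum_ite_mem]
  change μ {ω | (fun i => Z i ω) ∈ {z : Fin n → ℕ | ∑ i : Fin n, ((i : ℕ) + 1) * z i = n}} = _
  rw [hindep.measure_preimage_eq_sum_finset hmeas hZ]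
  simp only [Set.indicator_apply, Set.mem_ofPred_eq, hweighted_sum, hweight]
  rw [← sum_filter, sum_congr rfl fun S hS => by rw [(mem_filter_univ S).1 hS], sum_const,
    ← Nat.Partition.card_distincts_eq_card_filter_sum, nsmul_eq_mul, mul_assoc,
    ENNReal.ofReal_mul (Nat.cast_nonneg _), ENNReal.ofReal_natCast]

/-- If `Z_1, …, Z_n` are independent Bernoulli random variables with
`P(Z_i = 1) = x^i/(1+x^i)` for fixed `0 < x < 1`, then
`P(∑ i·Z_i = n) = q(n) · x^n · ∏ (1+x^i)⁻¹`, where `q(n)` is the number of partitions of `n`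
into distinct parts. -/
theorem boltzmann_distinct_partition_prob {Ω : Type*} [MeasurableSpace Ω]
    (μ : Measure Ω) [IsProbabilityMeasure μ] (n : ℕ)
    (x : ℝ) (hx0 : 0 < x) (hx1 : x < 1)
    (Z : Fin n → Ω → ℕ) (hmeas : ∀ i, Measurable (Z i))
    (hindep : iIndepFun Z μ)
    (hbern : ∀ (i : Fin n) (k : ℕ),
      μ {ω | Z i ω = k} = ENNReal.ofReal
        (if k = 0 then 1 / (1 + x ^ ((i : ℕ) + 1))
         else if k = 1 then x ^ ((i : ℕ) + 1) / (1 + x ^ ((i : ℕ) + 1))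
         else 0)) :
    μ {ω | ∑ i : Fin n, ((i : ℕ) + 1) * Z i ω = n}
      = ENNReal.ofReal (((Nat.Partition.distincts n).card : ℝ) * x ^ n *
          ∏ i : Fin n, (1 + x ^ ((i : ℕ) + 1))⁻¹) :=
  boltzmann_distinct_partition_prob_general μ n x hx0 Z hmeas hindep hbern
end

section
/- Let Z_1,…,Z_n be independent Poisson random variables with E[Z_i] = x^i / i! for fixed x > 0. Then P(∑_{i=1}^n i·Z_i = n) = B_n · (x^n / n!) · exp(−∑_{i=1}^n x^i / i!), where B_n is the n-th Bell number. -/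
open MeasureTheory ProbabilityTheory Finset

/-- The `n`-th Bell number: the number of set partitions of `{1,…,n}`. -/
noncomputable def bellNumber (n : ℕ) : ℕ :=
  Nat.card (Finpartition (Finset.univ : Finset (Fin n)))

open Nat

namespace BSP

variable {α : Type*} [DecidableEq α]

def sizes {t : Finset α} (P : Finpartition t) : Multiset ℕ := P.parts.1.map Finset.card

lemma sizes_sum {t : Finset α} (P : Finpartition t) : (sizes P).sum = t.card :=
  P.sum_card_parts

def pcount (t : Finset α) (m : Multiset ℕ) : ℕ :=
  #(Finset.univ.filter fun P : Finpartition t => sizes P = m)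

lemma pcount_eq_zero {t : Finset α} {m : Multiset ℕ} (h : m.sum ≠ t.card) :
    pcount t m = 0 := by
  rw [pcount, Finset.card_eq_zero, Finset.filter_eq_empty_iff]
  intro P _ hP
  exact h (hP ▸ sizes_sum P)

lemma prod_count_factorial_subset {m : Multiset ℕ} {F : Finset ℕ} (h : m.toFinset ⊆ F) :
    ∏ j ∈ F, (m.count j) ! = ∏ j ∈ m.toFinset, (m.count j) ! := by
  refine (Finset.prod_subset h fun x _ hx => ?_).symm
  have : m.count x = 0 := by rwa [Multiset.count_eq_zero, ← Multiset.mem_toFinset]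
  simp [this]

/-- The denominator `∏ j! · ∏ (count j)!`. -/
def Am (m : Multiset ℕ) : ℕ :=
  (m.map fun j => j !).prod * ∏ j ∈ m.toFinset, (m.count j) !

lemma Am_erase {m : Multiset ℕ} {k : ℕ} (hk : k ∈ m) :
    Am m = Am (m.erase k) * (k ! * m.count k) := by
  have hcons : k ::ₘ m.erase k = m := Multiset.cons_erase hk
  have h1 : (m.map fun j => j !).prod = k ! * ((m.erase k).map fun j => j !).prod := by
    conv_lhs => rw [← hcons]
    rw [Multiset.map_cons, Multiset.prod_cons]
  have hsub : (m.erase k).toFinset ⊆ m.toFinset := by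
    intro x hx
    rw [Multiset.mem_toFinset] at hx ⊢
    exact Multiset.mem_of_mem_erase hx
  have hkF : k ∈ m.toFinset := Multiset.mem_toFinset.2 hk
  have h2 : ∏ j ∈ m.toFinset, (m.count j) !
      = m.count k * ∏ j ∈ (m.erase k).toFinset, ((m.erase k).count j) ! := by
    rw [← prod_count_factorial_subset hsub]
    rw [← Finset.mul_prod_erase _ _ hkF, ← Finset.mul_prod_erase _ _ hkF]
    have hc1 : ∏ j ∈ m.toFinset.erase k, (m.count j) !
        = ∏ j ∈ m.toFinset.erase k, ((m.erase k).count j) ! := by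
      refine Finset.prod_congr rfl fun j hj => ?_
      rw [Multiset.count_erase_of_ne (Finset.mem_erase.1 hj).1]
    rw [hc1, Multiset.count_erase_self, ← mul_assoc,
      Nat.mul_factorial_pred (Multiset.count_pos.2 hk).ne']
  rw [Am, Am, h1, h2]
  ring

lemma avoid_parts_of_mem {t : Finset α} {P : Finpartition t} {b : Finset α}
    (hb : b ∈ P.parts) : (P.avoid b).parts = P.parts.erase b := by
  ext c
  rw [Finpartition.mem_avoid, Finset.mem_erase]
  constructor
  · rintro ⟨d, hd, hdb, rfl⟩
    have hdb' : d ≠ b := fun h => hdb (h ▸ le_refl b)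
    have hdisj : Disjoint d b := P.disjoint (Finset.mem_coe.2 hd) (Finset.mem_coe.2 hb) hdb'
    rw [hdisj.sdiff_eq_left]
    exact ⟨hdb', hd⟩
  · rintro ⟨hcb, hc⟩
    have hdisj : Disjoint c b := P.disjoint (Finset.mem_coe.2 hc) (Finset.mem_coe.2 hb) hcb
    refine ⟨c, hc, fun hle => ?_, hdisj.sdiff_eq_left⟩
    exact P.ne_bot hc (hdisj.eq_bot_of_le hle)

theorem key : ∀ (N : ℕ) (t : Finset α), t.card = N → ∀ m : Multiset ℕ, 0 ∉ m → m.sum = N →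
    pcount t m * Am m = N ! := by
  intro N
  induction N using Nat.strong_induction_on with
  | _ N IH =>
  intro t ht m h0 hsum
  rcases eq_or_ne m 0 with rfl | hm
  · -- base case : m = 0, N = 0
    have hN : N = 0 := by simpa using hsum.symm
    subst hN
    have htjoin : t = ∅ := Finset.card_eq_zero.1 ht
    subst htjoin
    have hall : ∀ P : Finpartition (∅ : Finset α), sizes P = 0 := by
      intro P
      have : P.parts = ∅ := Finpartition.parts_eq_empty_iff.2 rfl
      simp [sizes, this]
    haveI : Unique (Finpartition (∅ : Finset α)) := by
      rw [← Finset.bot_eq_empty]; infer_instance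
    rw [pcount, Finset.filter_true_of_mem fun P _ => hall P]
    simp [Am]
  · -- inductive step
    have hNpos : 0 < N := by
      rcases Nat.eq_zero_or_pos N with h | h
      · exfalso
        rcases Multiset.exists_mem_of_ne_zero hm with ⟨k, hk⟩
        have hk0 : k ≠ 0 := fun h' => h0 (h' ▸ hk)
        have : m.sum = 0 := hsum.trans h
        rw [Multiset.sum_eq_zero_iff] at this
        exact hk0 (this k hk)
      · exact h
    obtain ⟨a, ha⟩ : t.Nonempty := Finset.card_pos.1 (ht ▸ hNpos)
    set B : Finset (Finset α) := t.powerset.filter fun b => a ∈ b with hB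
    -- Step 1 : fiber decomposition over the block containing `a`
    have hmaps : ∀ P ∈ Finset.univ.filter fun P : Finpartition t => sizes P = m,
        P.part a ∈ B := by
      intro P _
      rw [hB, Finset.mem_filter, Finset.mem_powerset]
      exact ⟨P.le (P.part_mem.2 ha), P.mem_part ha⟩
    have hstep1 : pcount t m
        = ∑ b ∈ B, #(Finset.univ.filter
            fun P : Finpartition t => sizes P = m ∧ P.part a = b) := by
      rw [pcount, Finset.card_eq_sum_card_fiberwise hmaps]
      refine Finset.sum_congr rfl fun b _ => ?_
      rw [Finset.filter_filter]
    -- Step 2 : each fiber is counted by pcount of the complement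
    have hstep2 : ∀ b ∈ B, #(Finset.univ.filter
          fun P : Finpartition t => sizes P = m ∧ P.part a = b)
        = pcount (t \ b) (m.erase b.card) := by
      intro b hb
      rw [hB, Finset.mem_filter, Finset.mem_powerset] at hb
      obtain ⟨hbt, hab⟩ := hb
      by_cases hk : b.card ∈ m
      · -- the bijection via avoid / extend
        have hbne : b ≠ ⊥ := by
          rw [Finset.bot_eq_empty]
          exact Finset.ne_empty_of_mem hab
        have hdisj : Disjoint (t \ b) b := sdiff_disjoint
        have hsup : (t \ b) ⊔ b = t := sdiff_sup_cancel hbt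
        rw [pcount]
        refine Finset.card_bij' (fun P _ => P.avoid b)
          (fun Q _ => Q.extend hbne hdisj hsup) ?_ ?_ ?_ ?_
        · -- forward map lands in target
          rintro P hP
          rw [Finset.mem_filter] at hP ⊢
          obtain ⟨-, hsz, hpart⟩ := hP
          have hbP : b ∈ P.parts := hpart ▸ P.part_mem.2 ha
          refine ⟨Finset.mem_univ _, ?_⟩
          have hv : (P.avoid b).parts.val = P.parts.val.erase b := by
            rw [avoid_parts_of_mem hbP, Finset.erase_val]
          have hcons : b ::ₘ P.parts.val.erase b = P.parts.val :=
            Multiset.cons_erase hbP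
          have hms : m = b.card ::ₘ (P.parts.val.erase b).map Finset.card := by
            conv_lhs => rw [← hsz, sizes, ← hcons]
            rw [Multiset.map_cons]
          have hss : sizes (P.avoid b) = (P.parts.val.erase b).map Finset.card := by
            rw [sizes, hv]
          rw [hss, hms, Multiset.erase_cons_head]
        · -- backward map lands in source
          rintro Q hQ
          rw [Finset.mem_filter] at hQ ⊢
          obtain ⟨-, hsz⟩ := hQ
          have hbQ : b ∉ Q.parts := by
            intro h
            have := Q.le h hab
            exact (Finset.mem_sdiff.1 this).2 hab
          have hparts : (Q.extend hbne hdisj hsup).parts = insert b Q.parts := rfl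
          refine ⟨Finset.mem_univ _, ?_, ?_⟩
          · rw [sizes, hparts, Finset.insert_val_of_notMem hbQ, Multiset.map_cons,
              ← sizes, hsz, Multiset.cons_erase hk]
          · exact Finpartition.part_eq_of_mem _
              (hparts ▸ Finset.mem_insert_self b Q.parts) hab
        · -- left inverse
          rintro P hP
          rw [Finset.mem_filter] at hP
          obtain ⟨-, hsz, hpart⟩ := hP
          have hbP : b ∈ P.parts := hpart ▸ P.part_mem.2 ha
          apply Finpartition.ext
          have hparts : ∀ Q : Finpartition (t \ b),
              (Q.extend hbne hdisj hsup).parts = insert b Q.parts := fun _ => rfl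
          rw [hparts, avoid_parts_of_mem hbP, Finset.insert_erase hbP]
        · -- right inverse
          rintro Q hQ
          rw [Finset.mem_filter] at hQ
          obtain ⟨-, hsz⟩ := hQ
          have hbQ : b ∉ Q.parts := by
            intro h
            have := Q.le h hab
            exact (Finset.mem_sdiff.1 this).2 hab
          apply Finpartition.ext
          have hparts : (Q.extend hbne hdisj hsup).parts = insert b Q.parts := rfl
          rw [avoid_parts_of_mem (hparts ▸ Finset.mem_insert_self b Q.parts), hparts,
            Finset.erase_insert hbQ]
      · -- block size not in m : both sides are zero
        have h1 : #(Finset.univ.filter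
            fun P : Finpartition t => sizes P = m ∧ P.part a = b) = 0 := by
          rw [Finset.card_eq_zero, Finset.filter_eq_empty_iff]
          rintro P - ⟨hsz, hpart⟩
          have hbP : b ∈ P.parts := hpart ▸ P.part_mem.2 ha
          exact hk (hsz ▸ Multiset.mem_map_of_mem Finset.card hbP)
        rw [h1, Multiset.erase_of_notMem hk]
        refine (pcount_eq_zero ?_).symm
        rw [Finset.card_sdiff_of_subset hbt, ht, hsum]
        have hk1 : 0 < b.card := Finset.card_pos.2 ⟨a, hab⟩
        have hkN : b.card ≤ N := ht ▸ Finset.card_le_card hbt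
        omega
    -- Step 3 : evaluate each term via the induction hypothesis
    have hterm : ∀ b ∈ B, pcount (t \ b) (m.erase b.card) * Am m
        = (N - b.card)! * (b.card ! * m.count b.card) := by
      intro b hb
      rw [hB, Finset.mem_filter, Finset.mem_powerset] at hb
      obtain ⟨hbt, hab⟩ := hb
      have hk1 : 0 < b.card := Finset.card_pos.2 ⟨a, hab⟩
      have hkN : b.card ≤ N := ht ▸ Finset.card_le_card hbt
      have hcard : (t \ b).card = N - b.card := by rw [Finset.card_sdiff_of_subset hbt, ht]
      by_cases hk : b.card ∈ m
      · rw [Am_erase hk, ← mul_assoc]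
        congr 1
        refine IH (N - b.card) (by omega) (t \ b) hcard (m.erase b.card)
          (fun h => h0 (Multiset.mem_of_mem_erase h)) ?_
        have hc : b.card + (m.erase b.card).sum = m.sum := by
          conv_rhs => rw [← Multiset.cons_erase hk]
          rw [Multiset.sum_cons]
        omega
      · rw [Multiset.erase_of_notMem hk,
          pcount_eq_zero (by rw [hcard, hsum]; omega),
          Multiset.count_eq_zero.2 hk]
        ring
    have hsum2 : pcount t m * Am m
        = ∑ b ∈ B, (N - b.card)! * (b.card ! * m.count b.card) := by
      rw [hstep1, Finset.sum_mul]
      refine Finset.sum_congr rfl fun b hb => ?_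
      rw [hstep2 b hb, hterm b hb]
    -- group the sum by block size
    have hmapcard : ∀ b ∈ B, b.card ∈ Finset.Icc 1 N := by
      intro b hb
      rw [hB, Finset.mem_filter, Finset.mem_powerset] at hb
      exact Finset.mem_Icc.2 ⟨Finset.card_pos.2 ⟨a, hb.2⟩, ht ▸ Finset.card_le_card hb.1⟩
    have hgroup : ∑ b ∈ B, (N - b.card)! * (b.card ! * m.count b.card)
        = ∑ k ∈ Finset.Icc 1 N,
            #(B.filter fun b => b.card = k) * ((N - k)! * (k ! * m.count k)) := by
      rw [← Finset.sum_fiberwise_of_maps_to hmapcard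
        (fun b => (N - b.card)! * (b.card ! * m.count b.card))]
      refine Finset.sum_congr rfl fun k _ => ?_
      rw [Finset.sum_congr rfl (fun b hb => ?_), Finset.sum_const, smul_eq_mul]
      rw [(Finset.mem_filter.1 hb).2]
    have hfibcard : ∀ k, 1 ≤ k → #(B.filter fun b => b.card = k)
        = (N - 1).choose (k - 1) := by
      intro k hk1
      have hcp : #((t.erase a).powersetCard (k - 1)) = (N - 1).choose (k - 1) := by
        rw [Finset.card_powersetCard, Finset.card_erase_of_mem ha, ht]
      rw [← hcp]
      refine Finset.card_bij' (fun b _ => b.erase a) (fun s _ => insert a s) ?_ ?_ ?_ ?_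
      · intro b hb
        rw [Finset.mem_filter, hB, Finset.mem_filter, Finset.mem_powerset] at hb
        obtain ⟨⟨hbt, hab⟩, hbk⟩ := hb
        rw [Finset.mem_powersetCard]
        exact ⟨Finset.erase_subset_erase a hbt,
          by rw [Finset.card_erase_of_mem hab, hbk]⟩
      · intro s hs
        rw [Finset.mem_powersetCard] at hs
        obtain ⟨hst, hsc⟩ := hs
        have has : a ∉ s := fun h => (Finset.mem_erase.1 (hst h)).1 rfl
        rw [Finset.mem_filter, hB, Finset.mem_filter, Finset.mem_powerset]
        refine ⟨⟨Finset.insert_subset ha (hst.trans (Finset.erase_subset a t)),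
          Finset.mem_insert_self a s⟩, ?_⟩
        rw [Finset.card_insert_of_notMem has, hsc]
        omega
      · intro b hb
        rw [Finset.mem_filter, hB, Finset.mem_filter] at hb
        exact Finset.insert_erase hb.1.2
      · intro s hs
        rw [Finset.mem_powersetCard] at hs
        have has : a ∉ s := fun h => (Finset.mem_erase.1 (hs.1 h)).1 rfl
        exact Finset.erase_insert has
    have hIcc : ∀ k ∈ Finset.Icc 1 N,
        #(B.filter fun b => b.card = k) * ((N - k)! * (k ! * m.count k))
          = (N - 1)! * (k * m.count k) := by
      intro k hk
      rw [Finset.mem_Icc] at hk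
      rw [hfibcard k hk.1]
      have h1 : (N - k) + (k - 1) = N - 1 := by omega
      have h2 := Nat.add_choose_mul_factorial_mul_factorial (N - k) (k - 1)
      rw [h1] at h2
      have h3 : k ! = k * (k - 1)! := (Nat.mul_factorial_pred (by omega)).symm
      calc (N - 1).choose (k - 1) * ((N - k)! * (k ! * m.count k))
          = ((N - 1).choose (k - 1) * (N - k)! * (k - 1)!) * (k * m.count k) := by
            rw [h3]; ring
        _ = (N - 1)! * (k * m.count k) := by rw [h2]
    have hms : ∑ k ∈ Finset.Icc 1 N, k * m.count k = N := by
      have hsubIcc : m.toFinset ⊆ Finset.Icc 1 N := by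
        intro x hx
        rw [Multiset.mem_toFinset] at hx
        have hx0 : x ≠ 0 := fun h => h0 (h ▸ hx)
        have hxN : x ≤ m.sum := Multiset.single_le_sum (fun y _ => Nat.zero_le y) x hx
        rw [Finset.mem_Icc]
        omega
      rw [← Finset.sum_subset hsubIcc (fun x _ hx => by
        have : m.count x = 0 := by rwa [Multiset.count_eq_zero, ← Multiset.mem_toFinset]
        simp [this])]
      have := Finset.sum_multiset_count m
      rw [← hsum]
      conv_rhs => rw [this]
      refine Finset.sum_congr rfl fun x _ => ?_
      rw [smul_eq_mul, mul_comm]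
    rw [hsum2, hgroup, Finset.sum_congr rfl hIcc, ← Finset.mul_sum, hms,
      mul_comm, Nat.mul_factorial_pred hNpos.ne']



variable {n : ℕ}

/-- The multiset with `z i` copies of `i+1`. -/
def mz (n : ℕ) (z : Fin n → ℕ) : Multiset ℕ :=
  ∑ i : Fin n, Multiset.replicate (z i) ((i : ℕ) + 1)

lemma count_mz (z : Fin n → ℕ) (i : Fin n) : (mz n z).count ((i : ℕ) + 1) = z i := by
  rw [mz, Multiset.count_sum']
  rw [Finset.sum_eq_single i]
  · rw [Multiset.count_replicate, if_pos rfl]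
  · intro j _ hj
    rw [Multiset.count_replicate, if_neg]
    intro h
    exact hj (Fin.ext (by omega))
  · intro h
    exact absurd (Finset.mem_univ i) h

lemma mem_mz {z : Fin n → ℕ} {j : ℕ} (hj : j ∈ mz n z) :
    ∃ i : Fin n, j = (i : ℕ) + 1 ∧ z i ≠ 0 := by
  rw [mz, Multiset.mem_sum] at hj
  obtain ⟨i, -, hi⟩ := hj
  rw [Multiset.eq_of_mem_replicate hi]
  exact ⟨i, rfl, fun h => by simp [h] at hi⟩

lemma zero_not_mem_mz (z : Fin n → ℕ) : 0 ∉ mz n z := by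
  intro h
  obtain ⟨i, hi, -⟩ := mem_mz h
  omega

lemma multiset_sum_sum {ι : Type*} (s : Finset ι) (f : ι → Multiset ℕ) :
    (∑ i ∈ s, f i).sum = ∑ i ∈ s, (f i).sum := by
  induction s using Finset.cons_induction with
  | empty => simp
  | cons a s ha ih => simp [Finset.sum_cons, ih]

lemma multiset_prod_map_sum {ι : Type*} (s : Finset ι) (f : ι → Multiset ℕ)
    (g : ℕ → ℕ) : ((∑ i ∈ s, f i).map g).prod = ∏ i ∈ s, ((f i).map g).prod := by
  induction s using Finset.cons_induction with
  | empty => simp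
  | cons a s ha ih => simp [Finset.sum_cons, Multiset.map_add, ih]

lemma mz_sum (z : Fin n → ℕ) : (mz n z).sum = ∑ i : Fin n, ((i : ℕ) + 1) * z i := by
  rw [mz, multiset_sum_sum]
  refine Finset.sum_congr rfl fun i _ => ?_
  rw [Multiset.sum_replicate, smul_eq_mul, mul_comm]

lemma mz_prod_factorial (z : Fin n → ℕ) :
    ((mz n z).map fun j => j !).prod = ∏ i : Fin n, (((i : ℕ) + 1)!) ^ (z i) := by
  rw [mz, multiset_prod_map_sum]
  refine Finset.prod_congr rfl fun i _ => ?_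
  rw [Multiset.map_replicate, Multiset.prod_replicate]

lemma succ_inj_on : Set.InjOn (fun i : Fin n => (i : ℕ) + 1) ↑(Finset.univ : Finset (Fin n)) := by
  intro i _ j _ h
  have h' : (i : ℕ) + 1 = (j : ℕ) + 1 := h
  exact Fin.ext (by omega)

lemma mz_toFinset_subset (z : Fin n → ℕ) :
    (mz n z).toFinset ⊆ (Finset.univ : Finset (Fin n)).image (fun i : Fin n => (i : ℕ) + 1) := by
  intro j hj
  rw [Multiset.mem_toFinset] at hj
  obtain ⟨i, rfl, -⟩ := mem_mz hj
  exact Finset.mem_image_of_mem _ (Finset.mem_univ i)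

lemma mz_eq_of_bounded {m : Multiset ℕ} (hm : ∀ j ∈ m, 1 ≤ j ∧ j ≤ n) :
    mz n (fun i => m.count ((i : ℕ) + 1)) = m := by
  ext j
  rw [mz, Multiset.count_sum']
  by_cases hj : 1 ≤ j ∧ j ≤ n
  · have hlt : j - 1 < n := by omega
    rw [Finset.sum_eq_single (⟨j - 1, hlt⟩ : Fin n)]
    · rw [Multiset.count_replicate, if_pos (by simp; omega)]
      congr 1
      simp
      omega
    · intro i _ hi
      rw [Multiset.count_replicate, if_neg]
      intro h
      exact hi (Fin.ext (by simp at h ⊢; omega))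
    · intro h
      exact absurd (Finset.mem_univ _) h
  · have hjm : j ∉ m := fun h => hj (hm j h)
    rw [Multiset.count_eq_zero.2 hjm]
    refine Finset.sum_eq_zero fun i _ => ?_
    rw [Multiset.count_replicate, if_neg]
    intro h
    have := i.isLt
    omega

lemma sum_succ_mul_count {m : Multiset ℕ} (hm : ∀ j ∈ m, 1 ≤ j ∧ j ≤ n) :
    ∑ i : Fin n, ((i : ℕ) + 1) * m.count ((i : ℕ) + 1) = m.sum := by
  have h1 : ∑ i : Fin n, ((i : ℕ) + 1) * m.count ((i : ℕ) + 1)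
      = ∑ j ∈ (Finset.univ : Finset (Fin n)).image (fun i : Fin n => (i : ℕ) + 1),
          j * m.count j := by
    rw [Finset.sum_image (fun i hi j hj h => succ_inj_on hi hj h)]
  have hsub : m.toFinset ⊆ (Finset.univ : Finset (Fin n)).image (fun i : Fin n => (i : ℕ) + 1) := by
    intro j hj
    rw [Multiset.mem_toFinset] at hj
    obtain ⟨h1j, h2j⟩ := hm j hj
    refine Finset.mem_image.2 ⟨⟨j - 1, by omega⟩, Finset.mem_univ _, by simp; omega⟩
  rw [h1, ← Finset.sum_subset hsub (fun x _ hx => by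
    have : m.count x = 0 := by rwa [Multiset.count_eq_zero, ← Multiset.mem_toFinset]
    simp [this])]
  conv_rhs => rw [Finset.sum_multiset_count m]
  refine Finset.sum_congr rfl fun x _ => ?_
  rw [smul_eq_mul, mul_comm]


lemma mz_prod_count_factorial {n : ℕ} (z : Fin n → ℕ) :
    ∏ j ∈ (mz n z).toFinset, ((mz n z).count j) ! = ∏ i : Fin n, (z i) ! := by
  rw [← prod_count_factorial_subset (mz_toFinset_subset z),
    Finset.prod_image (fun i hi j hj h => succ_inj_on hi hj h)]
  exact Finset.prod_congr rfl fun i _ => by rw [count_mz]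

lemma sizes_bounded {n : ℕ} (P : Finpartition (Finset.univ : Finset (Fin n))) :
    ∀ j ∈ sizes P, 1 ≤ j ∧ j ≤ n := by
  intro j hj
  rw [sizes] at hj
  obtain ⟨b, hb, rfl⟩ := Multiset.mem_map.1 hj
  have hb' : b ∈ P.parts := hb
  constructor
  · exact Finset.card_pos.2 (P.nonempty_of_mem_parts hb')
  · calc #b ≤ #(Finset.univ : Finset (Fin n)) := Finset.card_le_univ b
      _ = n := Finset.card_fin n

/-- The finset of admissible type vectors. -/
def Sn (n : ℕ) : Finset (Fin n → ℕ) :=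
  (Fintype.piFinset fun _ : Fin n => Finset.range (n + 1)).filter
    fun z => ∑ i : Fin n, ((i : ℕ) + 1) * z i = n

lemma bell_eq_sum (n : ℕ) :
    bellNumber n = ∑ z ∈ Sn n, pcount (Finset.univ : Finset (Fin n)) (mz n z) := by
  rw [bellNumber, Nat.card_eq_fintype_card, ← Finset.card_univ]
  have hmaps : ∀ P ∈ (Finset.univ : Finset (Finpartition (Finset.univ : Finset (Fin n)))),
      (fun i : Fin n => (sizes P).count ((i : ℕ) + 1)) ∈ Sn n := by
    intro P _
    have hbd := sizes_bounded P
    have hsum : (sizes P).sum = n := by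
      rw [sizes_sum, Finset.card_fin]
    rw [Sn, Finset.mem_filter]
    constructor
    · refine Fintype.mem_piFinset.2 fun i => Finset.mem_range.2 ?_
      have h1 : (sizes P).count ((i : ℕ) + 1) ≤ Multiset.card (sizes P) :=
        Multiset.count_le_card _ _
      have h2 : Multiset.card (sizes P) * 1 ≤ (sizes P).sum := by
        have := Multiset.card_nsmul_le_sum (s := sizes P) (a := 1)
          (fun x hx => (hbd x hx).1)
        simpa using this
      omega
    · rw [sum_succ_mul_count hbd, hsum]
  rw [Finset.card_eq_sum_card_fiberwise hmaps]
  refine Finset.sum_congr rfl fun z hz => ?_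
  rw [pcount]
  congr 1
  refine Finset.filter_congr fun P _ => ?_
  constructor
  · intro h
    have hP : mz n (fun i => (sizes P).count ((i : ℕ) + 1)) = sizes P :=
      mz_eq_of_bounded (sizes_bounded P)
    rw [← h, hP]
  · intro h
    funext i
    rw [h, count_mz]

lemma key_applied {n : ℕ} {z : Fin n → ℕ} (hz : z ∈ Sn n) :
    pcount (Finset.univ : Finset (Fin n)) (mz n z)
      * ((∏ i : Fin n, (((i : ℕ) + 1)!) ^ (z i)) * ∏ i : Fin n, (z i) !) = n ! := by
  rw [Sn, Finset.mem_filter] at hz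
  have h := key n (Finset.univ : Finset (Fin n)) (Finset.card_fin n) (mz n z)
    (zero_not_mem_mz z) (by rw [mz_sum, hz.2])
  rwa [Am, mz_prod_factorial, mz_prod_count_factorial] at h

lemma real_sum_eq (n : ℕ) :
    ∑ z ∈ Sn n, (1 : ℝ) / ∏ i : Fin n, (((((i : ℕ) + 1)! : ℕ) : ℝ) ^ (z i) * (((z i) ! : ℕ) : ℝ))
      = (bellNumber n : ℝ) / (n ! : ℝ) := by
  have hfac : (0 : ℝ) < (n ! : ℝ) := by exact_mod_cast Nat.factorial_pos n
  rw [bell_eq_sum, Nat.cast_sum, Finset.sum_div]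
  refine Finset.sum_congr rfl fun z hz => ?_
  have hD : (0 : ℝ) < ∏ i : Fin n, (((((i : ℕ) + 1)! : ℕ) : ℝ) ^ (z i) * (((z i) ! : ℕ) : ℝ)) := by
    refine Finset.prod_pos fun i _ => ?_
    have h1 : (0 : ℝ) < ((((i : ℕ) + 1)! : ℕ) : ℝ) := by exact_mod_cast Nat.factorial_pos _
    have h2 : (0 : ℝ) < (((z i) ! : ℕ) : ℝ) := by exact_mod_cast Nat.factorial_pos _
    positivity
  have hkey := key_applied hz
  have hcast : (pcount (Finset.univ : Finset (Fin n)) (mz n z) : ℝ)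
      * ∏ i : Fin n, (((((i : ℕ) + 1)! : ℕ) : ℝ) ^ (z i) * (((z i) ! : ℕ) : ℝ)) = (n ! : ℝ) := by
    rw [Finset.prod_mul_distrib]
    exact_mod_cast hkey
  field_simp
  linarith [hcast]

end BSP

/-- If `Z_1, …, Z_n` are independent Poisson random variables with `E[Z_i] = x^i/i!` for
fixed `x > 0`, then `P(∑ i·Z_i = n) = B_n · (x^n/n!) · exp(-∑ x^i/i!)`, where `B_n` is the
`n`-th Bell number. -/
theorem boltzmann_set_partition_prob {Ω : Type*} [MeasurableSpace Ω]
    (μ : Measure Ω) [IsProbabilityMeasure μ] (n : ℕ)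
    (x : ℝ) (hx : 0 < x)
    (Z : Fin n → Ω → ℕ) (hmeas : ∀ i, Measurable (Z i))
    (hindep : iIndepFun Z μ)
    (hpois : ∀ (i : Fin n) (k : ℕ),
      μ {ω | Z i ω = k} = ENNReal.ofReal
        (Real.exp (-(x ^ ((i : ℕ) + 1) / (Nat.factorial ((i : ℕ) + 1) : ℝ))) *
          (x ^ ((i : ℕ) + 1) / (Nat.factorial ((i : ℕ) + 1) : ℝ)) ^ k /
            (Nat.factorial k : ℝ))) :
    μ {ω | ∑ i : Fin n, ((i : ℕ) + 1) * Z i ω = n}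
      = ENNReal.ofReal ((bellNumber n : ℝ) * (x ^ n / (Nat.factorial n : ℝ)) *
          Real.exp (-∑ i : Fin n, x ^ ((i : ℕ) + 1) / (Nat.factorial ((i : ℕ) + 1) : ℝ))) := by
  classical
  set lam : Fin n → ℝ := fun i => x ^ ((i : ℕ) + 1) / (Nat.factorial ((i : ℕ) + 1) : ℝ) with hlam
  set p : Fin n → ℕ → ℝ := fun i k => Real.exp (-(lam i)) * (lam i) ^ k / (k ! : ℝ) with hp
  have hlampos : ∀ i, 0 < lam i := fun i => by
    rw [hlam]
    have : (0 : ℝ) < ((((i : ℕ) + 1)! : ℕ) : ℝ) := by exact_mod_cast Nat.factorial_pos _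
    positivity
  have hpnonneg : ∀ i k, 0 ≤ p i k := fun i k => by
    rw [hp]
    have h1 : (0 : ℝ) < (k ! : ℝ) := by exact_mod_cast Nat.factorial_pos k
    have h2 := (hlampos i).le
    positivity
  -- decompose the event
  have hEvent : {ω | ∑ i : Fin n, ((i : ℕ) + 1) * Z i ω = n}
      = ⋃ z ∈ BSP.Sn n, ⋂ i : Fin n, (Z i) ⁻¹' {z i} := by
    ext ω
    simp only [Set.mem_setOf_eq, Set.mem_iUnion, Set.mem_iInter, Set.mem_preimage,
      Set.mem_singleton_iff]
    constructor
    · intro h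
      refine ⟨fun i => Z i ω, ?_, fun i => rfl⟩
      rw [BSP.Sn, Finset.mem_filter]
      refine ⟨Fintype.mem_piFinset.2 fun i => Finset.mem_range.2 ?_, h⟩
      have hle : ((i : ℕ) + 1) * Z i ω ≤ n := by
        conv_rhs => rw [← h]
        exact Finset.single_le_sum (f := fun j : Fin n => ((j : ℕ) + 1) * Z j ω)
          (fun j _ => Nat.zero_le _) (Finset.mem_univ i)
      have hle2 : Z i ω ≤ ((i : ℕ) + 1) * Z i ω := Nat.le_mul_of_pos_left _ (Nat.succ_pos _)
      omega
    · rintro ⟨z, hz, hzi⟩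
      rw [BSP.Sn, Finset.mem_filter] at hz
      calc ∑ i : Fin n, ((i : ℕ) + 1) * Z i ω
          = ∑ i : Fin n, ((i : ℕ) + 1) * z i :=
            Finset.sum_congr rfl fun i _ => by rw [hzi i]
        _ = n := hz.2
  have hdisj : (↑(BSP.Sn n) : Set (Fin n → ℕ)).PairwiseDisjoint
      fun z => ⋂ i : Fin n, (Z i) ⁻¹' {z i} := by
    intro z _ z' _ hne
    refine Set.disjoint_left.2 fun ω hω hω' => hne ?_
    simp only [Set.mem_iInter, Set.mem_preimage, Set.mem_singleton_iff] at hω hω'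
    funext i
    rw [← hω i, ← hω' i]
  have hmeasA : ∀ z ∈ BSP.Sn n, MeasurableSet (⋂ i : Fin n, (Z i) ⁻¹' {z i}) :=
    fun z _ => MeasurableSet.iInter fun i => hmeas i (measurableSet_singleton _)
  rw [hEvent, measure_biUnion_finset hdisj hmeasA]
  -- independence : product formula
  have hprodmeas : ∀ z : Fin n → ℕ,
      μ (⋂ i : Fin n, (Z i) ⁻¹' {z i}) = ∏ i : Fin n, μ ((Z i) ⁻¹' {z i}) := fun z =>
    hindep.meas_iInter fun i => ⟨{z i}, measurableSet_singleton _, rfl⟩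
  have hsingle : ∀ (i : Fin n) (k : ℕ), μ ((Z i) ⁻¹' {k}) = ENNReal.ofReal (p i k) := by
    intro i k
    have : (Z i) ⁻¹' {k} = {ω | Z i ω = k} := rfl
    rw [this, hpois i k]
  have hterm : ∀ z ∈ BSP.Sn n,
      μ (⋂ i : Fin n, (Z i) ⁻¹' {z i}) = ENNReal.ofReal (∏ i : Fin n, p i (z i)) := by
    intro z _
    rw [hprodmeas z]
    calc ∏ i : Fin n, μ ((Z i) ⁻¹' {z i})
        = ∏ i : Fin n, ENNReal.ofReal (p i (z i)) :=
          Finset.prod_congr rfl fun i _ => hsingle i (z i)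
      _ = ENNReal.ofReal (∏ i : Fin n, p i (z i)) :=
          (ENNReal.ofReal_prod_of_nonneg fun i _ => hpnonneg i (z i)).symm
  rw [Finset.sum_congr rfl hterm,
    ← ENNReal.ofReal_sum_of_nonneg fun z _ =>
      Finset.prod_nonneg fun i _ => hpnonneg i (z i)]
  congr 1
  -- the real computation
  have hper : ∀ z ∈ BSP.Sn n, ∏ i : Fin n, p i (z i)
      = Real.exp (-∑ i : Fin n, lam i) * x ^ n *
        (1 / ∏ i : Fin n, (((((i : ℕ) + 1)! : ℕ) : ℝ) ^ (z i) * (((z i) ! : ℕ) : ℝ))) := by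
    intro z hz
    rw [BSP.Sn, Finset.mem_filter] at hz
    have h1 : ∀ i : Fin n, p i (z i)
        = Real.exp (-(lam i)) *
          (x ^ (((i : ℕ) + 1) * z i) /
            (((((i : ℕ) + 1)! : ℕ) : ℝ) ^ (z i) * (((z i) ! : ℕ) : ℝ))) := by
      intro i
      simp only [hp, hlam]
      rw [div_pow, ← pow_mul, mul_div_assoc, div_div]
    have e1 : ∏ i : Fin n, Real.exp (-(lam i)) = Real.exp (-∑ i : Fin n, lam i) := by
      rw [← Real.exp_sum]
      congr 1
      rw [Finset.sum_neg_distrib]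
    have e2 : ∏ i : Fin n, (x ^ (((i : ℕ) + 1) * z i) /
          (((((i : ℕ) + 1)! : ℕ) : ℝ) ^ (z i) * (((z i) ! : ℕ) : ℝ)))
        = x ^ n * (1 / ∏ i : Fin n, (((((i : ℕ) + 1)! : ℕ) : ℝ) ^ (z i) * (((z i) ! : ℕ) : ℝ))) := by
      rw [Finset.prod_div_distrib, Finset.prod_pow_eq_pow_sum, hz.2, div_eq_mul_one_div]
    rw [Finset.prod_congr rfl fun i _ => h1 i, Finset.prod_mul_distrib, e1, e2, ← mul_assoc]
  rw [Finset.sum_congr rfl hper, ← Finset.mul_sum, BSP.real_sum_eq n]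
  ring
end

section
/- PDC deterministic second half reduces the expected number of rejections: with A = X^{(I)}, B = X_I a single discrete coordinate, and E an event such that for each a ∈ E^{(I)} there is a unique y_I(a) with (a, y_I(a)) ∈ E, the acceptance probability of the PDC algorithm, P(X^{(I)} ∈ E^{(I)} and U < P(X_I = y_I(X^{(I)})) / max_ℓ P(X_I = ℓ)), equals P((A,B) ∈ E) / max_ℓ P(X_I = ℓ), and hence is at least as large as the hard-rejection acceptance probability P((A,B) ∈ E), with the ratio equal to 1 / max_ℓ P(X_I = ℓ) ≥ 1. -/
/-!
Condition on the countably-valued `A`. Given `A = a ∈ E'`, independence makes the PDC test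
accept with probability `P(U < P(Z = y a)/M) = P(Z = y a)/M`, while `(a, Z) ∈ E` happens
exactly when `Z = y a`, with probability `P(Z = y a)`; for `a ∉ E'` both events are empty.
Summing over `a` gives the identity, and the inequality follows from `M ≤ 1`.
-/

open MeasureTheory ProbabilityTheory Set
open scoped ENNReal

section

variable {Ω α γ : Type*} [MeasurableSpace Ω] {μ : Measure Ω}

theorem ProbabilityTheory.IndepFun.measure_mem_section_eq_tsum [MeasurableSpace α]
    [Countable α] [MeasurableSingletonClass α] [MeasurableSpace γ]
    {A : Ω → α} {V : Ω → γ} (hA : Measurable A) (hV : Measurable V) (hAV : IndepFun A V μ)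
    (S : α → Set γ) (hS : ∀ a, MeasurableSet (S a)) :
    μ {ω | V ω ∈ S (A ω)} = ∑' a, μ (A ⁻¹' {a}) * μ (V ⁻¹' S a) := by
  have hdecomp : {ω | V ω ∈ S (A ω)} = ⋃ a, A ⁻¹' {a} ∩ V ⁻¹' S a := by
    ext ω
    simp
  have hdisj : Pairwise (Function.onFun Disjoint fun a => A ⁻¹' {a} ∩ V ⁻¹' S a) :=
    fun a b hab =>
      ((disjoint_singleton.mpr hab).preimage A).mono inter_subset_left inter_subset_left
  rw [hdecomp, measure_iUnion hdisj fun a => (hA (measurableSet_singleton a)).inter (hV (hS a))]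
  exact tsum_congr fun a =>
    hAV.measure_inter_preimage_eq_mul _ _ (measurableSet_singleton a) (hS a)

theorem measure_ofReal_lt_of_map_eq_uniform {U : Ω → ℝ} (hU : Measurable U)
    (hUunif : μ.map U = volume.restrict (Icc 0 1)) {c : ℝ≥0∞} (hc : c ≤ 1) :
    μ (U ⁻¹' {x | ENNReal.ofReal x < c}) = c := by
  have hctop : c ≠ ⊤ := ne_top_of_le_ne_top ENNReal.one_ne_top hc
  have hms : MeasurableSet {x : ℝ | ENNReal.ofReal x < c} :=
    measurableSet_lt ENNReal.measurable_ofReal measurable_const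
  have hIco : {x : ℝ | ENNReal.ofReal x < c} ∩ Icc 0 1 = Ico 0 c.toReal := by
    have hc1 : c.toReal ≤ 1 := ENNReal.toReal_le_of_le_ofReal zero_le_one (by simpa using hc)
    ext x
    simp only [mem_inter_iff, mem_ofPred_eq, mem_Icc, mem_Ico]
    constructor
    · rintro ⟨hxc, hx0, -⟩
      exact ⟨hx0, (ENNReal.ofReal_lt_iff_lt_toReal hx0 hctop).mp hxc⟩
    · rintro ⟨hx0, hxc⟩
      exact ⟨(ENNReal.ofReal_lt_iff_lt_toReal hx0 hctop).mpr hxc, hx0, hxc.le.trans hc1⟩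
  rw [← Measure.map_apply hU hms, hUunif, Measure.restrict_apply hms, hIco, Real.volume_Ico,
    sub_zero, ENNReal.ofReal_toReal hctop]

end

/-- **PDC deterministic second half reduces the expected number of rejections.**
`A = X^{(I)}` and `Z = X_I` are independent, `Z` discrete; `E'` is the projection of `E` onto
the first coordinate and, for every `a ∈ E'`, `y a` is the unique completion with
`(a, y a) ∈ E`.  With `U` uniform on `[0,1]` independent of `A`, and
`M = max_ℓ P(Z = ℓ)`, the PDC acceptance probability
`P(A ∈ E' and U < P(Z = y(A))/M)` equals `P((A,Z) ∈ E) / M`; hence it is at least the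
hard-rejection acceptance probability `P((A,Z) ∈ E)` (the ratio being `1/M ≥ 1`). -/
theorem pdc_dsh_acceptance
    {Ω α β : Type*} [MeasurableSpace Ω] [MeasurableSpace α] [MeasurableSpace β]
    [Countable α] [MeasurableSingletonClass α]
    [Countable β] [MeasurableSingletonClass β]
    (μ : Measure Ω) [IsProbabilityMeasure μ]
    (A : Ω → α) (Z : Ω → β) (U : Ω → ℝ)
    (hA : Measurable A) (hZ : Measurable Z) (hU : Measurable U)
    (hAZ : IndepFun A Z μ)
    (hUindep : IndepFun A U μ)
    (hUunif : μ.map U = MeasureTheory.volume.restrict (Set.Icc (0 : ℝ) 1))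
    (E : Set (α × β))
    (y : α → β)
    (hy : ∀ a ∈ {a | ∃ b, (a, b) ∈ E}, (a, y a) ∈ E)
    (huniq : ∀ a ∈ {a | ∃ b, (a, b) ∈ E}, ∀ b, (a, b) ∈ E → b = y a)
    (M : ENNReal) (hM : M = ⨆ ℓ : β, μ {ω | Z ω = ℓ}) :
    μ {ω | A ω ∈ {a | ∃ b, (a, b) ∈ E} ∧
        ENNReal.ofReal (U ω) < μ {ω' | Z ω' = y (A ω)} / M}
      = μ {ω | (A ω, Z ω) ∈ E} / M
    ∧ μ {ω | (A ω, Z ω) ∈ E}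
        ≤ μ {ω | A ω ∈ {a | ∃ b, (a, b) ∈ E} ∧
            ENNReal.ofReal (U ω) < μ {ω' | Z ω' = y (A ω)} / M} := by
  set E' : Set α := {a | ∃ b, (a, b) ∈ E}
  have hM1 : M ≤ 1 := hM ▸ iSup_le fun _ => prob_le_one
  have hsection (a : α) : {b | (a, b) ∈ E} = {b | a ∈ E' ∧ b = y a} :=
    Set.ext fun b =>
      ⟨fun hb => ⟨⟨b, hb⟩, huniq a ⟨b, hb⟩ b hb⟩, fun ⟨ha, hb⟩ => hb ▸ hy a ha⟩
  set T : α → Set ℝ := fun a =>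
    {x | a ∈ E' ∧ ENNReal.ofReal x < μ {ω' | Z ω' = y a} / M}
  have hTmeas (a : α) : MeasurableSet (T a) :=
    (MeasurableSet.const _).inter (measurableSet_lt ENNReal.measurable_ofReal measurable_const)
  have hconditional (a : α) : μ (U ⁻¹' T a) = μ (Z ⁻¹' {b | (a, b) ∈ E}) / M := by
    have hp : μ {ω' | Z ω' = y a} / M ≤ 1 := by
      refine ENNReal.div_le_of_le_mul ?_
      rw [one_mul, hM]
      exact le_iSup (fun ℓ => μ {ω | Z ω = ℓ}) (y a)
    by_cases ha : a ∈ E'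
    · simp only [T, hsection, ha, true_and]
      exact measure_ofReal_lt_of_map_eq_uniform hU hUunif hp
    · simp [T, hsection, ha]
  have hLR : μ {ω | A ω ∈ E' ∧ ENNReal.ofReal (U ω) < μ {ω' | Z ω' = y (A ω)} / M}
      = μ {ω | (A ω, Z ω) ∈ E} / M := by
    change μ {ω | U ω ∈ T (A ω)} = μ {ω | Z ω ∈ {b | (A ω, b) ∈ E}} / M
    rw [hUindep.measure_mem_section_eq_tsum hA hU T hTmeas,
      hAZ.measure_mem_section_eq_tsum hA hZ (fun a => {b | (a, b) ∈ E})
        fun _ => (Set.to_countable _).measurableSet,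
      div_eq_mul_inv, ← ENNReal.tsum_mul_right]
    simp_rw [hconditional, div_eq_mul_inv, mul_assoc]
  refine ⟨hLR, ?_⟩
  rw [hLR]
  exact (div_one _).ge.trans (ENNReal.div_le_div_left hM1 _)
end

section
/- Output correctness of PDC deterministic second half: under the uniqueness assumption (for each a ∈ E^{(I)} there is a unique y_I(a) with (a, y_I(a)) ∈ E), the output σ_I(a, y_I(a)) of Algorithm PDC-DSH, where a is accepted with probability P(X_I = y_I(a)) / max_ℓ P(X_I = ℓ), has law ℒ((X^{(I)}, X_I) | (X^{(I)}, X_I) ∈ E). -/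
/-!
Given `A = a`, the proposal is accepted with probability `P(Z = y a) / M`, independently of
`A`, so the accepted output has unnormalised law `P(A = a) P(Z = y a) / M` at `(a, y a)`.
By independence of `A` and `Z` and uniqueness of `y a`, this is `1 / M` times
`P((A, Z) = (a, y a), (A, Z) ∈ E)`, and normalising removes the factor `1 / M`.
-/

open MeasureTheory ProbabilityTheory

theorem volume_restrict_Icc_ofReal_lt {c : ENNReal} (hc : c ≤ 1) :
    volume.restrict (Set.Icc (0 : ℝ) 1) {x | ENNReal.ofReal x < c} = c := by
  have hctop : c ≠ ⊤ := ne_top_of_le_ne_top ENNReal.one_ne_top hc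
  have hinter : {x : ℝ | ENNReal.ofReal x < c} ∩ Set.Icc 0 1 = Set.Ico 0 c.toReal := by
    ext x
    simp only [Set.mem_inter_iff, Set.mem_ofPred_eq, Set.mem_Icc, Set.mem_Ico]
    constructor
    · rintro ⟨hxc, hx0, -⟩
      exact ⟨hx0, (ENNReal.ofReal_lt_iff_lt_toReal hx0 hctop).1 hxc⟩
    · rintro ⟨hx0, hxc⟩
      refine ⟨(ENNReal.ofReal_lt_iff_lt_toReal hx0 hctop).2 hxc, hx0, hxc.le.trans ?_⟩
      exact ENNReal.toReal_le_of_le_ofReal zero_le_one (by simpa using hc)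
  rw [Measure.restrict_apply' measurableSet_Icc, hinter, Real.volume_Ico, sub_zero,
    ENNReal.ofReal_toReal hctop]

theorem iSup_measure_fiber_ne_zero {Ω β : Type*} [MeasurableSpace Ω] [Countable β]
    (μ : Measure Ω) [NeZero μ] (Z : Ω → β) : ⨆ ℓ, μ {ω | Z ω = ℓ} ≠ 0 := by
  intro h
  have hnull : μ (⋃ ℓ, {ω | Z ω = ℓ}) = 0 :=
    measure_iUnion_null fun ℓ => le_antisymm (h ▸ le_iSup (fun ℓ => μ {ω | Z ω = ℓ}) ℓ) bot_le
  rw [Set.iUnion_eq_univ_iff.2 fun ω => ⟨Z ω, rfl⟩, Measure.measure_univ_eq_zero] at hnull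
  exact NeZero.ne μ hnull

theorem mem_iff_fst_mem_and_snd_eq {α β : Type*} {E : Set (α × β)} {y : α → β}
    (hy : ∀ a ∈ {a | ∃ b, (a, b) ∈ E}, (a, y a) ∈ E)
    (huniq : ∀ a ∈ {a | ∃ b, (a, b) ∈ E}, ∀ b, (a, b) ∈ E → b = y a) {a : α} {b : β} :
    (a, b) ∈ E ↔ a ∈ {a | ∃ b, (a, b) ∈ E} ∧ b = y a := by
  constructor
  · intro hab
    exact ⟨⟨b, hab⟩, huniq a ⟨b, hab⟩ b hab⟩
  · rintro ⟨ha, rfl⟩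
    exact hy a ha

theorem map_cond_eq_of_map_restrict_eq_smul {Ω γ : Type*} [MeasurableSpace Ω] [MeasurableSpace γ]
    {μ : Measure Ω} {f g : Ω → γ} (hf : Measurable f) (hg : Measurable g) {s t : Set Ω}
    {c : ENNReal} (hc0 : c ≠ 0) (hctop : c ≠ ⊤)
    (h : (μ.restrict s).map f = c • (μ.restrict t).map g) :
    (μ[|s]).map f = (μ[|t]).map g := by
  have hmass : μ s = c * μ t := by
    simpa [Measure.map_apply hf MeasurableSet.univ, Measure.map_apply hg MeasurableSet.univ]
      using congrArg (· Set.univ) h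
  rw [ProbabilityTheory.cond, ProbabilityTheory.cond, Measure.map_smul, Measure.map_smul, h,
    smul_smul, hmass, ENNReal.mul_inv (Or.inl hc0) (Or.inl hctop), mul_right_comm,
    ENNReal.inv_mul_cancel hc0 hctop, one_mul]

theorem map_restrict_accepted_eq_inv_smul {Ω α β : Type*} [MeasurableSpace Ω] [MeasurableSpace α]
    [MeasurableSpace β] [Countable α] [MeasurableSingletonClass α]
    [Countable β] [MeasurableSingletonClass β]
    {μ : Measure Ω} {A : Ω → α} {Z : Ω → β} {U : Ω → ℝ}
    (hA : Measurable A) (hZ : Measurable Z) (hU : Measurable U)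
    (hAZ : IndepFun A Z μ) (hAU : IndepFun A U μ)
    (hUunif : μ.map U = volume.restrict (Set.Icc (0 : ℝ) 1))
    (D : Set α) (y : α → β) {M : ENNReal} (hM : ∀ ℓ, μ {ω | Z ω = ℓ} ≤ M) :
    (μ.restrict {ω | A ω ∈ D ∧ ENNReal.ofReal (U ω) < μ {ω' | Z ω' = y (A ω)} / M}).map
        (fun ω => (A ω, y (A ω)))
      = M⁻¹ • (μ.restrict {ω | A ω ∈ D ∧ Z ω = y (A ω)}).map (fun ω => (A ω, Z ω)) := by
  have hD : MeasurableSet D := D.to_countable.measurableSet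
  have hy : Measurable y := measurable_of_countable y
  have hacc : Measurable fun a => μ {ω' | Z ω' = y a} / M := measurable_of_countable _
  have hS : MeasurableSet
      {ω | A ω ∈ D ∧ ENNReal.ofReal (U ω) < μ {ω' | Z ω' = y (A ω)} / M} :=
    (hA hD).inter (measurableSet_lt (ENNReal.measurable_ofReal.comp hU) (hacc.comp hA))
  have hF : MeasurableSet {ω | A ω ∈ D ∧ Z ω = y (A ω)} :=
    (hA hD).inter (measurableSet_eq_fun hZ (hy.comp hA))
  have hout : Measurable fun ω => (A ω, y (A ω)) := hA.prodMk (hy.comp hA)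
  refine Measure.ext_of_singleton fun ⟨a, b⟩ => ?_
  rw [Measure.smul_apply, Measure.map_apply hout (measurableSet_singleton _),
    Measure.map_apply (hA.prodMk hZ) (measurableSet_singleton _), Measure.restrict_apply' hS,
    Measure.restrict_apply' hF, smul_eq_mul]
  by_cases hab : a ∈ D ∧ y a = b
  · obtain ⟨ha, rfl⟩ := hab
    have hSa : (fun ω => (A ω, y (A ω))) ⁻¹' {(a, y a)} ∩
          {ω | A ω ∈ D ∧ ENNReal.ofReal (U ω) < μ {ω' | Z ω' = y (A ω)} / M}
        = A ⁻¹' {a} ∩ U ⁻¹' {x | ENNReal.ofReal x < μ {ω' | Z ω' = y a} / M} := by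
      ext ω
      simp only [Set.mem_inter_iff, Set.mem_preimage, Set.mem_singleton_iff, Prod.mk.injEq,
        Set.mem_ofPred_eq]
      grind
    have hFa : (fun ω => (A ω, Z ω)) ⁻¹' {(a, y a)} ∩ {ω | A ω ∈ D ∧ Z ω = y (A ω)}
        = A ⁻¹' {a} ∩ Z ⁻¹' {y a} := by
      ext ω
      simp only [Set.mem_inter_iff, Set.mem_preimage, Set.mem_singleton_iff, Prod.mk.injEq,
        Set.mem_ofPred_eq]
      grind
    have hUa : μ (U ⁻¹' {x | ENNReal.ofReal x < μ {ω' | Z ω' = y a} / M})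
        = μ {ω' | Z ω' = y a} / M := by
      rw [← Measure.map_apply hU (measurableSet_lt ENNReal.measurable_ofReal measurable_const),
        hUunif, volume_restrict_Icc_ofReal_lt (ENNReal.div_le_of_le_mul (by simpa using hM _))]
    rw [hSa, hFa, hAU.measure_inter_preimage_eq_mul _ _ (measurableSet_singleton a)
      (measurableSet_lt ENNReal.measurable_ofReal measurable_const), hUa,
      hAZ.measure_inter_preimage_eq_mul _ _ (measurableSet_singleton a)
      (measurableSet_singleton _), ENNReal.div_eq_inv_mul]
    exact mul_left_comm _ _ _
  · have hSa : (fun ω => (A ω, y (A ω))) ⁻¹' {(a, b)} ∩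
          {ω | A ω ∈ D ∧ ENNReal.ofReal (U ω) < μ {ω' | Z ω' = y (A ω)} / M} = ∅ := by
      ext ω
      simp only [Set.mem_inter_iff, Set.mem_preimage, Set.mem_singleton_iff, Prod.mk.injEq,
        Set.mem_ofPred_eq, Set.mem_empty_iff_false, iff_false]
      grind
    have hFa : (fun ω => (A ω, Z ω)) ⁻¹' {(a, b)} ∩ {ω | A ω ∈ D ∧ Z ω = y (A ω)} = ∅ := by
      ext ω
      simp only [Set.mem_inter_iff, Set.mem_preimage, Set.mem_singleton_iff, Prod.mk.injEq,
        Set.mem_ofPred_eq, Set.mem_empty_iff_false, iff_false]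
      grind
    rw [hSa, hFa, measure_empty, mul_zero]

theorem pdc_dsh_output_correct_general
    {Ω α β : Type*} [MeasurableSpace Ω] [MeasurableSpace α] [MeasurableSpace β]
    [Countable α] [MeasurableSingletonClass α]
    [Countable β] [MeasurableSingletonClass β]
    (μ : Measure Ω) [IsProbabilityMeasure μ]
    (A : Ω → α) (Z : Ω → β) (U : Ω → ℝ)
    (hA : Measurable A) (hZ : Measurable Z) (hU : Measurable U)
    (hAZ : IndepFun A Z μ)
    (hUindep : IndepFun A U μ)
    (hUunif : μ.map U = MeasureTheory.volume.restrict (Set.Icc (0 : ℝ) 1))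
    (E : Set (α × β))
    (y : α → β)
    (hy : ∀ a ∈ {a | ∃ b, (a, b) ∈ E}, (a, y a) ∈ E)
    (huniq : ∀ a ∈ {a | ∃ b, (a, b) ∈ E}, ∀ b, (a, b) ∈ E → b = y a)
    (M : ENNReal) (hM : M = ⨆ ℓ : β, μ {ω | Z ω = ℓ}) :
    (μ[|{ω | A ω ∈ {a | ∃ b, (a, b) ∈ E} ∧
        ENNReal.ofReal (U ω) < μ {ω' | Z ω' = y (A ω)} / M}]).map
          (fun ω => (A ω, y (A ω)))
      = (μ[|{ω | (A ω, Z ω) ∈ E}]).map (fun ω => (A ω, Z ω)) := by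
  have hE : {ω | (A ω, Z ω) ∈ E} = {ω | A ω ∈ {a | ∃ b, (a, b) ∈ E} ∧ Z ω = y (A ω)} :=
    Set.ext fun ω => mem_iff_fst_mem_and_snd_eq hy huniq
  have hMle : ∀ ℓ, μ {ω | Z ω = ℓ} ≤ M := fun ℓ => hM ▸ le_iSup (fun ℓ => μ {ω | Z ω = ℓ}) ℓ
  have hM0 : M ≠ 0 := hM ▸ iSup_measure_fiber_ne_zero μ Z
  have hMtop : M ≠ ⊤ :=
    hM ▸ ne_top_of_le_ne_top ENNReal.one_ne_top (iSup_le fun _ => prob_le_one)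
  rw [hE]
  exact map_cond_eq_of_map_restrict_eq_smul (hA.prodMk ((measurable_of_countable y).comp hA))
    (hA.prodMk hZ) (ENNReal.inv_ne_zero.2 hMtop) (ENNReal.inv_ne_top.2 hM0)
    (map_restrict_accepted_eq_inv_smul hA hZ hU hAZ hUindep hUunif _ y hMle)

/-- **Output correctness of PDC deterministic second half.** Under the uniqueness assumption
(for each `a` in the projection `E'` of `E` there is a unique `y a` with `(a, y a) ∈ E`),
the output `(a, y a)` of the PDC-DSH algorithm — where the first-stage sample `a` is accepted
when `U < P(Z = y a) / max_ℓ P(Z = ℓ)` for `U` uniform on `[0,1]` independent of `A` — has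
law `ℒ((X^{(I)}, X_I) | (X^{(I)}, X_I) ∈ E)`. -/
theorem pdc_dsh_output_correct
    {Ω α β : Type*} [MeasurableSpace Ω] [MeasurableSpace α] [MeasurableSpace β]
    [Countable α] [MeasurableSingletonClass α]
    [Countable β] [MeasurableSingletonClass β]
    (μ : Measure Ω) [IsProbabilityMeasure μ]
    (A : Ω → α) (Z : Ω → β) (U : Ω → ℝ)
    (hA : Measurable A) (hZ : Measurable Z) (hU : Measurable U)
    (hAZ : IndepFun A Z μ)
    (hUindep : IndepFun A U μ)
    (hUunif : μ.map U = MeasureTheory.volume.restrict (Set.Icc (0 : ℝ) 1))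
    (E : Set (α × β))
    (y : α → β) (hymeas : Measurable y)
    (hy : ∀ a ∈ {a | ∃ b, (a, b) ∈ E}, (a, y a) ∈ E)
    (huniq : ∀ a ∈ {a | ∃ b, (a, b) ∈ E}, ∀ b, (a, b) ∈ E → b = y a)
    (M : ENNReal) (hM : M = ⨆ ℓ : β, μ {ω | Z ω = ℓ})
    (hpos : 0 < μ {ω | (A ω, Z ω) ∈ E}) :
    (μ[|{ω | A ω ∈ {a | ∃ b, (a, b) ∈ E} ∧
        ENNReal.ofReal (U ω) < μ {ω' | Z ω' = y (A ω)} / M}]).map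
          (fun ω => (A ω, y (A ω)))
      = (μ[|{ω | (A ω, Z ω) ∈ E}]).map (fun ω => (A ω, Z ω)) :=
  pdc_dsh_output_correct_general μ A Z U hA hZ hU hAZ hUindep hUunif E y hy huniq M hM
end
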